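/- Let k be a field of characteristic zero and L a Lie algebra over k. For each p ≥ 0 the convolution power e^{⋆p}/p! of the Eulerian idempotent, as a linear map U(L) → U(L), is zero on U_q(L) for every q ≠ p and is the identity on U_p(L). -/

import Mathlib

/-!
STATEMENT 1: For each p ≥ 0 the convolution power e^{⋆p}/p! of the Eulerian
idempotent, as a linear map U(L) → U(L), is zero on U_q(L) for every q ≠ p and is
the identity on U_p(L).
-/


open TensorProduct

attribute [local instance 100] LieRing.ofAssociativeRing

noncomputable section

namespace Stmt1

variable (k : Type*) [Field k] [CharZero k]
variable (L : Type*) [LieRing L] [LieAlgebra k L]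

abbrev U := UniversalEnvelopingAlgebra k L

/-- the canonical embedding `L → U(L)` as a linear map -/
def ιU : L →ₗ[k] U k L := (UniversalEnvelopingAlgebra.ι k).toLinearMap

/-- `ℓ ↦ ℓ ⊗ 1 + 1 ⊗ ℓ` as a morphism of Lie algebras into `U(L) ⊗ U(L)`. -/
def comulGen : L →ₗ⁅k⁆ (U k L ⊗[k] U k L) where
  toFun l := (ιU k L l) ⊗ₜ 1 + 1 ⊗ₜ (ιU k L l)
  map_add' x y := by
    simp [TensorProduct.add_tmul, TensorProduct.tmul_add]; abel
  map_smul' c x := by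
    simp [TensorProduct.smul_tmul', TensorProduct.tmul_smul, smul_add]
  map_lie' := by
    intro x y
    simp only [ιU, Ring.lie_def, LieHom.coe_toLinearMap, LieHom.map_lie]
    simp only [mul_add, add_mul, Algebra.TensorProduct.tmul_mul_tmul, mul_one, one_mul,
      TensorProduct.sub_tmul, TensorProduct.tmul_sub]
    abel

/-- The coproduct of the Hopf algebra `U(L)`, determined by
`Δ(ℓ) = 1 ⊗ ℓ + ℓ ⊗ 1` for `ℓ ∈ L`. -/
def comul : U k L →ₐ[k] (U k L ⊗[k] U k L) :=
  UniversalEnvelopingAlgebra.lift k (comulGen k L)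

/-- The counit of the Hopf algebra `U(L)`. -/
def counit : U k L →ₐ[k] k :=
  UniversalEnvelopingAlgebra.lift k (0 : L →ₗ⁅k⁆ k)

/-- The convolution product on linear endomorphisms of `U(L)`:
`f ⋆ g = μ ∘ (f ⊗ g) ∘ Δ`. -/
def conv (f g : U k L →ₗ[k] U k L) : U k L →ₗ[k] U k L :=
  (LinearMap.mul' k (U k L)) ∘ₗ (TensorProduct.map f g) ∘ₗ (comul k L).toLinearMap

/-- `η ∘ ε`, the unit for the convolution product. -/
def unitCounit : U k L →ₗ[k] U k L :=
  (Algebra.linearMap k (U k L)) ∘ₗ (counit k L).toLinearMap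

/-- Convolution powers `f^{⋆ n}` (with `f^{⋆0} = η ∘ ε`). -/
def convPow (f : U k L →ₗ[k] U k L) : ℕ → (U k L →ₗ[k] U k L)
  | 0 => unitCounit k L
  | n + 1 => conv k L f (convPow f n)

/-- `J = 𝟏 - η ∘ ε`. -/
def J : U k L →ₗ[k] U k L := LinearMap.id - unitCounit k L

/-- The property of being the Eulerian idempotent
`e = log⋆(𝟏) = J - J^{⋆2}/2 + J^{⋆3}/3 - ⋯`: on each element the series is
eventually constant (since `J` is locally conilpotent) and `e` is its value. -/
def IsEulerianIdempotent (e : U k L →ₗ[k] U k L) : Prop :=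
  ∀ x : U k L, ∃ N : ℕ, ∀ M ≥ N,
    e x = ∑ n ∈ Finset.Icc 1 M, ((-1 : k) ^ (n + 1) * (n : k)⁻¹) • (convPow k L (J k L) n) x

/-- The symmetrized product `(l₁, …, lₙ) = (1/n!) Σ_{σ ∈ Sₙ} l_{σ(1)} ⋯ l_{σ(n)}`
in `U(L)`. -/
def symProd {n : ℕ} (l : Fin n → L) : U k L :=
  ((n.factorial : k)⁻¹) • ∑ σ : Equiv.Perm (Fin n), (List.ofFn fun i => ιU k L (l (σ i))).prod

/-- `Uₙ(L)`, the subspace of `U(L)` spanned by the symmetrized products of `n`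
elements of `L`. -/
def Usub (n : ℕ) : Submodule k (U k L) :=
  Submodule.span k {x : U k L | ∃ l : Fin n → L, x = symProd k L l}

/-
On the powers `ℓ ^ q` of a single `ℓ ∈ L`, the maps `𝟏` and `η ∘ ε` act diagonally, and so does
everything built from them by convolution. Record such a map by the exponential generating
function `F` with `ℓ ^ q ↦ q! [t^q] F • ℓ ^ q`. Since `Δ(ℓ ^ q) = ∑ C(q, i) ℓ ^ i ⊗ ℓ ^ (q - i)`,
convolution multiplies generating functions, so `𝟏 ↦ exp t`, `J ↦ exp t - 1` and
`e ↦ log (1 + (exp t - 1)) = t`; the truncated series `∑_{n ≤ M} (-1)^(n+1)/n (exp t - 1)^n` has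
derivative `1 - (1 - exp t) ^ M`, so it agrees with `t` up to order `M`. Hence `e^{⋆p}` multiplies
`ℓ ^ q` by `q! [t^q] t ^ p = p! δ_{pq}`. Finally `U_q(L)` is spanned by the powers `ℓ ^ q`: by
inclusion–exclusion, `∑_σ l_{σ 1} ⋯ l_{σ q}` is the alternating sum of the `(∑_{i ∉ T} l_i) ^ q`
over the subsets `T`.
-/

section

open PowerSeries Finset Nat

variable {k L}

theorem _root_.PowerSeries.derivative_sum_Icc_smul_exp_sub_one_pow {K : Type*} [Field K]
    [CharZero K] (M : ℕ) :
    d⁄dX K (∑ n ∈ Icc 1 M, ((-1 : K) ^ (n + 1) * (n : K)⁻¹) • (exp K - 1) ^ n) =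
      1 - (1 - exp K) ^ M := by
  induction M with
  | zero => simp
  | succ M ih =>
    have hc : (-1 : K) ^ (M + 1 + 1) * ((M + 1 : ℕ) : K)⁻¹ * (M + 1 : ℕ) = (-1) ^ M := by
      field_simp; ring
    rw [sum_Icc_succ_top (by omega), map_add, ih, Derivation.map_smul, derivative_pow,
      map_sub, derivative_exp, Derivation.map_one_eq_zero, sub_zero, smul_eq_C_mul,
      Nat.add_sub_cancel, ← map_natCast (C (R := K)), ← mul_assoc, ← mul_assoc, ← map_mul, hc,
      map_pow, map_neg, map_one, ← mul_pow, neg_one_mul, neg_sub]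
    ring

theorem _root_.PowerSeries.coeff_sum_Icc_smul_exp_sub_one_pow {K : Type*} [Field K]
    [CharZero K] {M q : ℕ} (hq : q ≤ M) :
    coeff q (∑ n ∈ Icc 1 M, ((-1 : K) ^ (n + 1) * (n : K)⁻¹) • (exp K - 1) ^ n) = coeff q X := by
  rcases q with _ | q
  · simp only [coeff_zero_eq_constantCoeff, map_sum, map_smul, map_pow, map_sub,
      constantCoeff_exp, map_one, sub_self, coeff_X]
    refine sum_eq_zero fun n hn => ?_
    rw [zero_pow (Nat.one_le_iff_ne_zero.mp (mem_Icc.mp hn).1), smul_zero]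
  · obtain ⟨g, hg⟩ : X ∣ 1 - exp K := X_dvd_iff.mpr (by simp [constantCoeff_exp])
    have hderiv := congrArg (coeff q) (derivative_sum_Icc_smul_exp_sub_one_pow (K := K) M)
    rw [coeff_derivative, hg, mul_pow, map_sub, coeff_X_pow_mul', if_neg (by omega), sub_zero,
      coeff_one] at hderiv
    have hq : ((q : K) + 1) ≠ 0 := by exact_mod_cast q.succ_ne_zero
    rw [coeff_X, ← mul_left_inj' hq, hderiv]
    split_ifs <;> simp_all

theorem _root_.MultilinearMap.sum_perm_apply_comp_eq_alternating_sum {R M N ι : Type*}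
    [Semiring R] [AddCommMonoid M] [AddCommGroup N] [Module R M] [Module R N] [Fintype ι]
    [DecidableEq ι]
    (f : MultilinearMap R (fun _ : ι => M) N) (x : ι → M) :
    ∑ σ : Equiv.Perm ι, f (x ∘ σ) =
      ∑ t : Finset ι, (-1 : ℤ) ^ #t • f (fun _ => ∑ i ∈ tᶜ, x i) := by
  set avoid : ι → Finset (ι → ι) := fun i => Fintype.piFinset fun _ => {i}ᶜ
  have hinf : ∀ t : Finset ι, t.inf avoid = Fintype.piFinset fun _ => tᶜ := fun t => by
    ext r; simp only [avoid, mem_inf, Fintype.mem_piFinset, mem_compl, mem_singleton]; grind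
  have hsurj : ∀ r : ι → ι, r ∈ univ.inf (fun i => (avoid i)ᶜ) ↔ Function.Surjective r := by
    intro r; simp [avoid, mem_inf, Fintype.mem_piFinset, Function.Surjective]
  simp_rw [f.map_sum_finset (fun _ => x), ← hinf, ← powerset_univ,
    ← inclusion_exclusion_sum_inf_compl]
  refine sum_bij' (fun σ _ => ⇑σ)
    (fun r hr => Equiv.ofBijective r ((hsurj r).1 hr).bijective_of_finite) (fun σ _ => ?_)
    (fun _ _ => mem_univ _) (fun _ _ => Equiv.ext fun _ => rfl) (fun _ _ => rfl) (fun _ _ => rfl)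
  exact (hsurj σ).2 σ.surjective

def ActsOnPowersBy (f : U k L →ₗ[k] U k L) (l : L) (F : k⟦X⟧) : Prop :=
  ∀ q, f (ιU k L l ^ q) = ((q ! : k) * coeff q F) • ιU k L l ^ q

omit [CharZero k] in
theorem counit_ι (l : L) : counit k L (ιU k L l) = 0 :=
  UniversalEnvelopingAlgebra.lift_ι_apply k (0 : L →ₗ⁅k⁆ k) l

omit [CharZero k] in
theorem comul_ι (l : L) : comul k L (ιU k L l) = ιU k L l ⊗ₜ 1 + 1 ⊗ₜ ιU k L l :=
  UniversalEnvelopingAlgebra.lift_ι_apply k (comulGen k L) l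

omit [CharZero k] in
theorem comul_ι_pow (l : L) (q : ℕ) :
    comul k L (ιU k L l ^ q) =
      ∑ m ∈ antidiagonal q, q.choose m.1 • ((ιU k L l ^ m.1) ⊗ₜ[k] (ιU k L l ^ m.2)) := by
  have hcomm : Commute (ιU k L l ⊗ₜ[k] (1 : U k L)) (1 ⊗ₜ ιU k L l) := by
    simp [Commute, SemiconjBy, Algebra.TensorProduct.tmul_mul_tmul]
  simp only [map_pow, comul_ι, hcomm.add_pow', Algebra.TensorProduct.tmul_pow, one_pow,
    Algebra.TensorProduct.tmul_mul_tmul, mul_one, one_mul]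

omit [CharZero k] in
theorem actsOnPowersBy_unitCounit (l : L) : ActsOnPowersBy (unitCounit k L) l 1 := by
  rintro (_ | q) <;> simp [unitCounit, counit_ι, coeff_one]

theorem actsOnPowersBy_id (l : L) : ActsOnPowersBy LinearMap.id l (exp k) := by
  intro q
  simp [coeff_exp, factorial_ne_zero]

omit [CharZero k] in
theorem ActsOnPowersBy.sub {f g : U k L →ₗ[k] U k L} {l : L} {F G : k⟦X⟧}
    (hf : ActsOnPowersBy f l F) (hg : ActsOnPowersBy g l G) :
    ActsOnPowersBy (f - g) l (F - G) := by
  intro q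
  rw [LinearMap.sub_apply, hf, hg, map_sub, mul_sub, sub_smul]

theorem actsOnPowersBy_J (l : L) : ActsOnPowersBy (J k L) l (exp k - 1) :=
  (actsOnPowersBy_id l).sub (actsOnPowersBy_unitCounit l)

omit [CharZero k] in
theorem ActsOnPowersBy.conv {f g : U k L →ₗ[k] U k L} {l : L} {F G : k⟦X⟧}
    (hf : ActsOnPowersBy f l F) (hg : ActsOnPowersBy g l G) :
    ActsOnPowersBy (conv k L f g) l (F * G) := by
  intro q
  rw [Stmt1.conv, LinearMap.comp_apply, LinearMap.comp_apply, AlgHom.toLinearMap_apply,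
    comul_ι_pow, coeff_mul, mul_sum, sum_smul, map_sum, map_sum]
  refine sum_congr rfl fun ⟨i, j⟩ hij => ?_
  obtain rfl : i + j = q := HasAntidiagonal.mem_antidiagonal.mp hij
  have hfac : ((i + j).choose i : k) * i ! * j ! = (i + j) ! := by
    rw [← Nat.cast_mul, ← Nat.cast_mul, choose_symm_add, add_choose_mul_factorial_mul_factorial]
  rw [← Nat.cast_smul_eq_nsmul k, map_smul, map_smul, TensorProduct.map_tmul,
    LinearMap.mul'_apply, hf i, hg j, smul_mul_smul_comm, ← pow_add, smul_smul, ← hfac]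
  congr 1
  ring

omit [CharZero k] in
theorem ActsOnPowersBy.convPow {f : U k L →ₗ[k] U k L} {l : L} {F : k⟦X⟧}
    (hf : ActsOnPowersBy f l F) (n : ℕ) : ActsOnPowersBy (convPow k L f n) l (F ^ n) := by
  induction n with
  | zero => exact actsOnPowersBy_unitCounit l
  | succ n ih => exact pow_succ' F n ▸ hf.conv ih

theorem IsEulerianIdempotent.actsOnPowersBy_X {e : U k L →ₗ[k] U k L}
    (he : IsEulerianIdempotent k L e) (l : L) : ActsOnPowersBy e l X := by
  intro q
  obtain ⟨N, hN⟩ := he (ιU k L l ^ q)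
  rw [hN (max N q) (le_max_left _ _), ← coeff_sum_Icc_smul_exp_sub_one_pow (le_max_right N q),
    map_sum, mul_sum, sum_smul]
  refine sum_congr rfl fun n _ => ?_
  rw [(actsOnPowersBy_J l).convPow n q, smul_smul, map_smul, smul_eq_mul, mul_left_comm]

omit [CharZero k] in
theorem symProd_mem_span_pow {n : ℕ} (l : Fin n → L) :
    symProd k L l ∈ Submodule.span k (Set.range fun m : L => ιU k L m ^ n) := by
  have hpolar := (MultilinearMap.mkPiAlgebraFin k n (U k L)).sum_perm_apply_comp_eq_alternating_sum
    (ιU k L ∘ l)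
  simp only [MultilinearMap.mkPiAlgebraFin_apply_const] at hpolar
  simp only [MultilinearMap.mkPiAlgebraFin_apply, Function.comp_def, ← map_sum] at hpolar
  rw [symProd, hpolar]
  exact Submodule.smul_mem _ _ <| Submodule.sum_mem _ fun t _ =>
    Submodule.smul_of_tower_mem _ _ <| Submodule.subset_span ⟨_, rfl⟩

omit [CharZero k] in
theorem Usub_le_span_pow (n : ℕ) :
    Usub k L n ≤ Submodule.span k (Set.range fun m : L => ιU k L m ^ n) := by
  rw [Usub, Submodule.span_le]
  rintro _ ⟨l, rfl⟩
  exact symProd_mem_span_pow l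

theorem IsEulerianIdempotent.convPow_apply_of_mem_Usub {e : U k L →ₗ[k] U k L}
    (he : IsEulerianIdempotent k L e) (p : ℕ) {q : ℕ} {x : U k L} (hx : x ∈ Usub k L q) :
    convPow k L e p x = (if q = p then (p ! : k) else 0) • x := by
  have hpow : Set.EqOn (convPow k L e p)
      ⇑((if q = p then (p ! : k) else 0) • (LinearMap.id : U k L →ₗ[k] U k L))
      (Set.range fun m : L => ιU k L m ^ q) := by
    rintro _ ⟨m, rfl⟩
    rw [(he.actsOnPowersBy_X m).convPow p q, coeff_X_pow]
    split_ifs with h <;> simp [h]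
  exact LinearMap.eqOn_span' hpow (Usub_le_span_pow q hx)

end

/-- `e^{⋆p}/p!` is zero on `U_q(L)` for `q ≠ p` and the identity on `U_p(L)`. -/
theorem convPow_eulerian_div_factorial_eq_proj
    (e : U k L →ₗ[k] U k L) (he : IsEulerianIdempotent k L e) (p : ℕ) :
    (∀ q : ℕ, q ≠ p → ∀ x ∈ Usub k L q, ((p.factorial : k)⁻¹) • (convPow k L e p) x = 0) ∧
    (∀ x ∈ Usub k L p, ((p.factorial : k)⁻¹) • (convPow k L e p) x = x) := by
  have hfac : (p.factorial : k) ≠ 0 := Nat.cast_ne_zero.mpr p.factorial_ne_zero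
  refine ⟨fun q hqp x hx => ?_, fun x hx => ?_⟩
  · rw [he.convPow_apply_of_mem_Usub p hx, if_neg hqp, zero_smul, smul_zero]
  · rw [he.convPow_apply_of_mem_Usub p hx, if_pos rfl, smul_smul, inv_mul_cancel₀ hfac, one_smul]

end Stmt1
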